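/- Let u_1,…,u_d be a ℤ-basis of ℤ^d, let x_1 ∈ ℤ^d, let l ≥ 1 be an integer, let a_1,…,a_{d−1} ∈ ℤ with a_i ≥ −l for all i, and set x_2 = x_1 + l·u_d. Then the convex hull of the 2d points {x_1, x_1+u_1, …, x_1+u_{d−1}, x_2, x_2+u_1+a_1 u_d, …, x_2+u_{d−1}+a_{d−1} u_d} contains exactly d(l+1) + Σ_{i=1}^{d−1} a_i lattice points, i.e. points of ℤ^d. -/

import Mathlib

/-!
A unimodular affine change of coordinates maps lattice points bijectively onto lattice points and
commutes with convex hulls, so we may take `u` to be the standard basis and `x₁ = 0`. The thickened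
edge is then the truncated prism over the corner simplex `conv(0, e₁, …, e_{d-1})` whose height
over `p` is the affine function `l + a ⬝ᵥ p`. The corner simplex has no lattice points besides its
vertices, so a lattice point of the prism lies over `0` or over some `eᵢ`; there are `l + 1` of
them over `0` and `l + aᵢ + 1` over `eᵢ`.
-/

open Matrix

def ofInt {d : ℕ} (z : Fin d → ℤ) : Fin d → ℝ := fun i => (z i : ℝ)

section Unimodular

variable {d : ℕ}

lemma ofInt_injective : Function.Injective (ofInt (d := d)) := fun _ _ h =>
  funext fun i => by simpa [ofInt] using congrFun h i

lemma ofInt_add_vecMul (x z : Fin d → ℤ) (U : Matrix (Fin d) (Fin d) ℤ) :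
    ofInt (x + z ᵥ* U) = ofInt x + ofInt z ᵥ* U.map (Int.cast : ℤ → ℝ) := by
  funext j
  simp only [ofInt, Pi.add_apply, Int.cast_add]
  congr 1
  exact RingHom.map_vecMul (Int.castRingHom ℝ) U z j

lemma ncard_inter_lattice_eq_ncard_preimage (s : Set (Fin d → ℝ)) :
    (s ∩ {x | ∃ z, x = ofInt z}).ncard = (ofInt ⁻¹' s).ncard := by
  have hL : {x : Fin d → ℝ | ∃ z, x = ofInt z} = Set.range ofInt := by
    ext x
    exact exists_congr fun z => eq_comm
  rw [hL, ← Set.image_preimage_eq_inter_range, Set.ncard_image_of_injective _ ofInt_injective]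

lemma preimage_convexHull_image_unimodular {U : Matrix (Fin d) (Fin d) ℤ} (hU : IsUnit U)
    (x : Fin d → ℤ) (S : Set (Fin d → ℤ)) :
    ofInt ⁻¹' convexHull ℝ (ofInt '' ((fun z => x + z ᵥ* U) '' S)) =
      (fun z => x + z ᵥ* U) '' (ofInt ⁻¹' convexHull ℝ (ofInt '' S)) := by
  let A : (Fin d → ℝ) →ᵃ[ℝ] (Fin d → ℝ) :=
    (U.map (Int.cast : ℤ → ℝ)).vecMulLinear.toAffineMap + AffineMap.const ℝ _ (ofInt x)
  have hA : ∀ z, ofInt (x + z ᵥ* U) = A (ofInt z) := fun z => by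
    rw [ofInt_add_vecMul, add_comm]
    rfl
  have hA_inj : Function.Injective A := fun y y' h =>
    vecMul_injective_of_isUnit (hU.map (Int.castRingHom ℝ).mapMatrix) (add_right_cancel h)
  have himg : ofInt '' ((fun z => x + z ᵥ* U) '' S) = A '' (ofInt '' S) := by
    rw [Set.image_image, Set.image_image]
    exact Set.image_congr fun z _ => hA z
  rw [himg, ← AffineMap.image_convexHull]
  ext z
  constructor
  · rintro ⟨y, hy, hyz⟩
    obtain ⟨w, hw⟩ := (vecMul_surjective_iff_isUnit.mpr hU) (z - x)
    obtain rfl : z = x + w ᵥ* U := by rw [show w ᵥ* U = z - x from hw, add_sub_cancel]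
    refine ⟨w, ?_, rfl⟩
    rw [hA] at hyz
    rwa [Set.mem_preimage, ← hA_inj hyz]
  · rintro ⟨w, hw, rfl⟩
    exact ⟨ofInt w, hw, (hA w).symm⟩

lemma ncard_preimage_convexHull_image_unimodular {U : Matrix (Fin d) (Fin d) ℤ} (hU : IsUnit U)
    (x : Fin d → ℤ) (S : Set (Fin d → ℤ)) :
    (ofInt ⁻¹' convexHull ℝ (ofInt '' ((fun z => x + z ᵥ* U) '' S))).ncard =
      (ofInt ⁻¹' convexHull ℝ (ofInt '' S)).ncard := by
  rw [preimage_convexHull_image_unimodular hU]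
  exact Set.ncard_image_of_injective _
    ((add_right_injective x).comp (vecMul_injective_of_isUnit hU))

end Unimodular

section TruncatedPrism

variable {m : ℕ}

lemma ofInt_snoc (p : Fin m → ℤ) (t : ℤ) :
    ofInt (Fin.snoc p t : Fin (m + 1) → ℤ) = Fin.snoc (ofInt p) (t : ℝ) := by
  funext j
  induction j using Fin.lastCases <;> simp [ofInt]

lemma ofInt_dotProduct (a p : Fin m → ℤ) : ofInt a ⬝ᵥ ofInt p = ((a ⬝ᵥ p : ℤ) : ℝ) :=
  (RingHom.map_dotProduct (Int.castRingHom ℝ) a p).symm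

lemma snoc_mem_segment (q : Fin m → ℝ) {s h : ℝ} (hs : s ∈ Set.Icc 0 h) :
    (Fin.snoc q s : Fin (m + 1) → ℝ) ∈ segment ℝ (Fin.snoc q 0) (Fin.snoc q h) := by
  let f : ℝ →ᵃ[ℝ] Fin (m + 1) → ℝ := AffineMap.lineMap (Fin.snoc q 0) (Fin.snoc q 1)
  have hf : ∀ r, f r = Fin.snoc q r := fun r => by
    funext j
    induction j using Fin.lastCases <;> simp [f, AffineMap.lineMap_apply]
  rw [← hf, ← hf, ← hf, ← image_segment, segment_eq_Icc (hs.1.trans hs.2)]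
  exact Set.mem_image_of_mem f hs

def truncatedPrismVertices (V : Set (Fin m → ℤ)) (c : ℤ) (a : Fin m → ℤ) :
    Set (Fin (m + 1) → ℤ) :=
  (fun p => Fin.snoc p 0) '' V ∪ (fun p => Fin.snoc p (c + a ⬝ᵥ p)) '' V

lemma convexHull_truncatedPrismVertices_subset {V : Set (Fin m → ℤ)} {c : ℤ} {a : Fin m → ℤ}
    (hφ : ∀ p ∈ V, 0 ≤ c + a ⬝ᵥ p) :
    convexHull ℝ (ofInt '' truncatedPrismVertices V c a) ⊆
      {y | Fin.init y ∈ convexHull ℝ (ofInt '' V) ∧ 0 ≤ y (Fin.last m) ∧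
        y (Fin.last m) - ofInt a ⬝ᵥ Fin.init y ≤ c} := by
  let φ : (Fin (m + 1) → ℝ) →ₗ[ℝ] ℝ := LinearMap.proj (Fin.last m) -
    dotProductBilin ℝ ℝ (ofInt a) ∘ₗ LinearMap.funLeft ℝ ℝ Fin.castSucc
  refine convexHull_min ?_ <|
    ((convex_convexHull ℝ _).linear_preimage (LinearMap.funLeft ℝ ℝ Fin.castSucc)).inter <|
      (convex_halfSpace_ge (LinearMap.proj (Fin.last m)).isLinear 0).inter <|
        convex_halfSpace_le (f := φ) φ.isLinear (c : ℝ)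
  rintro _ ⟨_, ⟨p, hp, rfl⟩ | ⟨p, hp, rfl⟩, rfl⟩ <;>
    have : (0 : ℝ) ≤ c + (a ⬝ᵥ p : ℤ) := by exact_mod_cast hφ p hp
  all_goals
    simp only [Set.mem_ofPred_eq, ofInt_snoc, Fin.init_snoc, Fin.snoc_last, ofInt_dotProduct]
    refine ⟨subset_convexHull ℝ _ ⟨p, hp, rfl⟩, ?_, ?_⟩ <;> push_cast <;> linarith

lemma preimage_convexHull_truncatedPrismVertices {V : Set (Fin m → ℤ)}
    (hV : ∀ p, ofInt p ∈ convexHull ℝ (ofInt '' V) → p ∈ V) {c : ℤ} {a : Fin m → ℤ}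
    (hφ : ∀ p ∈ V, 0 ≤ c + a ⬝ᵥ p) :
    ofInt ⁻¹' convexHull ℝ (ofInt '' truncatedPrismVertices V c a) =
      {z : Fin (m + 1) → ℤ | Fin.init z ∈ V ∧ 0 ≤ z (Fin.last m) ∧
        z (Fin.last m) ≤ c + a ⬝ᵥ Fin.init z} := by
  ext z
  constructor
  · intro hz
    obtain ⟨hinit, hlast, hgraph⟩ := convexHull_truncatedPrismVertices_subset hφ hz
    refine ⟨hV _ hinit, by simpa [ofInt] using hlast, ?_⟩
    have : ((z (Fin.last m) - a ⬝ᵥ Fin.init z : ℤ) : ℝ) ≤ c := by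
      push_cast
      rw [← ofInt_dotProduct]
      exact hgraph
    linarith [show z (Fin.last m) - a ⬝ᵥ Fin.init z ≤ c by exact_mod_cast this]
  · rintro ⟨hp, h0, hc⟩
    rw [Set.mem_preimage, ← Fin.snoc_init_self z, ofInt_snoc]
    refine segment_subset_convexHull ?_ ?_
      (snoc_mem_segment (h := ((c + a ⬝ᵥ Fin.init z : ℤ) : ℝ)) _ ⟨?_, ?_⟩)
    · exact ⟨_, Or.inl ⟨_, hp, rfl⟩, by simp [ofInt_snoc]⟩
    · exact ⟨_, Or.inr ⟨_, hp, rfl⟩, ofInt_snoc _ _⟩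
    · exact_mod_cast h0
    · exact_mod_cast hc

lemma ncard_truncatedPrism_eq_sum (V : Finset (Fin m → ℤ)) (g : (Fin m → ℤ) → ℤ) :
    {z : Fin (m + 1) → ℤ | Fin.init z ∈ V ∧ 0 ≤ z (Fin.last m) ∧
      z (Fin.last m) ≤ g (Fin.init z)}.ncard = ∑ p ∈ V, (g p + 1).toNat := by
  have hset : {z : Fin (m + 1) → ℤ | Fin.init z ∈ V ∧ 0 ≤ z (Fin.last m) ∧
      z (Fin.last m) ≤ g (Fin.init z)} =
      ↑((V.sigma fun p => Finset.Icc 0 (g p)).image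
        fun x => (Fin.snoc x.1 x.2 : Fin (m + 1) → ℤ)) := by
    ext z
    simp only [Set.mem_ofPred_eq, Finset.coe_image, Set.mem_image, Finset.mem_coe,
      Finset.mem_sigma, Finset.mem_Icc]
    constructor
    · rintro ⟨hp, h0, hg⟩
      exact ⟨⟨Fin.init z, z (Fin.last m)⟩, ⟨hp, h0, hg⟩, Fin.snoc_init_self z⟩
    · rintro ⟨⟨p, t⟩, ⟨hp, h0, hg⟩, rfl⟩
      simpa using ⟨hp, h0, hg⟩
  rw [hset, Set.ncard_coe_finset, Finset.card_image_of_injective, Finset.card_sigma]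
  · simp [Int.card_Icc]
  · rintro ⟨p, t⟩ ⟨p', t'⟩ h
    obtain ⟨rfl, rfl⟩ := Fin.snoc_injective2 h
    rfl

end TruncatedPrism

section CornerSimplex

lemma eq_zero_or_eq_single_of_sum_le_one {ι : Type*} [Fintype ι] [DecidableEq ι] {p : ι → ℤ}
    (h0 : ∀ i, 0 ≤ p i) (h1 : ∑ i, p i ≤ 1) : p = 0 ∨ ∃ i, p = Pi.single i 1 := by
  rcases eq_or_ne p 0 with hp | hp
  · exact Or.inl hp
  obtain ⟨i, hi⟩ := Function.ne_iff.mp hp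
  have hpair : ∀ j ≠ i, p i + p j ≤ 1 := fun j hj =>
    (Finset.sum_pair hj.symm).symm.le.trans
      ((Finset.sum_le_sum_of_subset_of_nonneg (Finset.subset_univ _) fun k _ _ => h0 k).trans h1)
  have hpi : p i = 1 := by
    have := Finset.single_le_sum (fun k _ => h0 k) (Finset.mem_univ i)
    have := h0 i
    simp only [Pi.zero_apply] at hi
    omega
  refine Or.inr ⟨i, funext fun j => ?_⟩
  rcases eq_or_ne j i with rfl | hj
  · simp [hpi]
  · have := hpair j hj
    have := h0 j
    rw [Pi.single_eq_of_ne hj]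
    omega

variable (m : ℕ)

def cornerVertices : Finset (Fin m → ℤ) :=
  insert 0 (Finset.univ.image fun i => Pi.single i 1)

variable {m}

lemma mem_cornerVertices_of_ofInt_mem_convexHull {p : Fin m → ℤ}
    (hp : ofInt p ∈ convexHull ℝ (ofInt '' cornerVertices m)) : p ∈ cornerVertices m := by
  let K : Set (Fin m → ℝ) := Set.Ici 0 ∩ {y | ∑ i, y i ≤ 1}
  have hK : Convex ℝ K := (convex_Ici 0).inter (convex_halfSpace_le
    ⟨fun _ _ => Finset.sum_add_distrib, fun _ _ => (Finset.mul_sum _ _ _).symm⟩ 1)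
  have hsub : ofInt '' cornerVertices m ⊆ K := by
    rintro _ ⟨q, hq, rfl⟩
    simp only [cornerVertices, Finset.coe_insert, Finset.coe_image, Set.mem_insert_iff,
      Set.mem_image, Finset.coe_univ, Set.mem_univ, true_and] at hq
    rcases hq with rfl | ⟨i, rfl⟩ <;>
      simp [K, ofInt, Pi.le_def, Pi.single_apply, apply_ite]
  obtain ⟨hnonneg, hsum⟩ := convexHull_min hsub hK hp
  have h0 : ∀ i, 0 ≤ p i := fun i => by simpa [ofInt] using hnonneg i
  have h1 : ∑ i, p i ≤ 1 := by
    have : ((∑ i, p i : ℤ) : ℝ) ≤ 1 := by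
      push_cast
      exact hsum
    exact_mod_cast this
  rcases eq_zero_or_eq_single_of_sum_le_one h0 h1 with rfl | ⟨i, rfl⟩
  · exact Finset.mem_insert_self _ _
  · exact Finset.mem_insert_of_mem (Finset.mem_image_of_mem _ (Finset.mem_univ i))

lemma sum_cornerVertices {M : Type*} [AddCommMonoid M] (f : (Fin m → ℤ) → M) :
    ∑ p ∈ cornerVertices m, f p = f 0 + ∑ i, f (Pi.single i 1) := by
  rw [cornerVertices, Finset.sum_insert, Finset.sum_image]
  · intro i _ j _ h
    simpa [Pi.single_apply] using congrFun h i
  · simp [Finset.mem_image, funext_iff, Pi.single_apply]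

end CornerSimplex

section ThickenedEdge

variable {m : ℕ}

lemma snoc_vecMul_of (u : Fin (m + 1) → Fin (m + 1) → ℤ) (p : Fin m → ℤ) (t : ℤ) :
    (Fin.snoc p t : Fin (m + 1) → ℤ) ᵥ* Matrix.of u =
      ∑ i, p i • u i.castSucc + t • u (Fin.last m) := by
  simp only [vecMul_eq_sum, Fin.sum_univ_castSucc, Fin.snoc_castSucc, Fin.snoc_last]
  rfl

lemma image_truncatedPrismVertices_cornerVertices (u : Fin (m + 1) → Fin (m + 1) → ℤ)
    (x₁ : Fin (m + 1) → ℤ) (l : ℤ) (a : Fin m → ℤ) :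
    (fun z => x₁ + z ᵥ* Matrix.of u) '' truncatedPrismVertices (cornerVertices m) l a =
      {x₁, x₁ + l • u (Fin.last m)} ∪
        (Set.range fun i : Fin m => x₁ + u i.castSucc) ∪
        (Set.range fun i : Fin m =>
          x₁ + l • u (Fin.last m) + u i.castSucc + a i • u (Fin.last m)) := by
  simp only [truncatedPrismVertices, cornerVertices, Finset.coe_insert, Finset.coe_image,
    Finset.coe_univ, Set.image_univ, ← Set.range_comp, Function.comp_def, Set.image_union,
    Set.image_insert_eq, snoc_vecMul_of, Pi.zero_apply, zero_smul, Finset.sum_const_zero,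
    add_zero, zero_add, dotProduct_zero, dotProduct_single, mul_one, Pi.single_apply, ite_smul,
    one_smul, Finset.sum_ite_eq', Finset.mem_univ, if_true]
  rw [show (fun i : Fin m => x₁ + (u i.castSucc + (l + a i) • u (Fin.last m))) =
      fun i => x₁ + l • u (Fin.last m) + u i.castSucc + a i • u (Fin.last m) from
    funext fun i => by rw [add_smul]; abel]
  ext y
  simp only [Set.mem_union, Set.mem_insert_iff, Set.mem_singleton_iff]
  tauto

lemma ncard_lattice_convexHull_thickenedEdge (u : Fin (m + 1) → Fin (m + 1) → ℤ)
    (hu : IsUnit (Matrix.of u)) (x₁ : Fin (m + 1) → ℤ) {l : ℤ} (hl : 0 ≤ l)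
    (a : Fin m → ℤ) (ha : ∀ i, -l ≤ a i) :
    (((convexHull ℝ (ofInt ''
        ({x₁, x₁ + l • u (Fin.last m)} ∪
          (Set.range fun i : Fin m => x₁ + u i.castSucc) ∪
          (Set.range fun i : Fin m =>
            x₁ + l • u (Fin.last m) + u i.castSucc + a i • u (Fin.last m))))) ∩
      {x : Fin (m + 1) → ℝ | ∃ z : Fin (m + 1) → ℤ, x = ofInt z}).ncard : ℤ)
      = (m + 1) * (l + 1) + ∑ i, a i := by
  have hφ : ∀ p ∈ (cornerVertices m : Set (Fin m → ℤ)), 0 ≤ l + a ⬝ᵥ p := by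
    intro p hp
    rcases Finset.mem_insert.mp hp with rfl | hp
    · simpa using hl
    · obtain ⟨i, -, rfl⟩ := Finset.mem_image.mp hp
      simpa [dotProduct_single] using (by linarith [ha i] : 0 ≤ l + a i)
  have hfiber : ∀ i, ((l + a i + 1).toNat : ℤ) = l + a i + 1 :=
    fun i => Int.toNat_of_nonneg (by linarith [ha i])
  rw [← image_truncatedPrismVertices_cornerVertices, ncard_inter_lattice_eq_ncard_preimage,
    ncard_preimage_convexHull_image_unimodular hu,
    preimage_convexHull_truncatedPrismVertices
      (fun _ => mem_cornerVertices_of_ofInt_mem_convexHull) hφ]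
  simp only [Finset.mem_coe]
  rw [ncard_truncatedPrism_eq_sum (g := fun p => l + a ⬝ᵥ p), sum_cornerVertices]
  simp only [dotProduct_zero, dotProduct_single, mul_one, add_zero, Nat.cast_add, Nat.cast_sum,
    hfiber, Int.toNat_of_nonneg (by omega : 0 ≤ l + 1), Finset.sum_add_distrib, Finset.sum_const,
    Finset.card_univ, Fintype.card_fin, nsmul_eq_mul]
  ring

end ThickenedEdge

/-- The thickened edge contains exactly `d(l+1) + Σ a_i` lattice points. -/
theorem thickened_edge_lattice_points (d : ℕ) (hd : 1 ≤ d)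
    (u : Fin d → (Fin d → ℤ))
    (hbasis : (Matrix.of fun i j => u i j).det = 1 ∨
      (Matrix.of fun i j => u i j).det = -1)
    (x₁ : Fin d → ℤ) (l : ℤ) (hl : 1 ≤ l)
    (a : Fin (d - 1) → ℤ) (ha : ∀ i, -l ≤ a i)
    (x₂ : Fin d → ℤ) (hx₂ : x₂ = x₁ + l • u ⟨d - 1, by omega⟩) :
    (((convexHull ℝ (ofInt ''
        ({x₁, x₂} ∪
          (Set.range fun i : Fin (d - 1) => x₁ + u (Fin.castLE (Nat.sub_le d 1) i)) ∪
          (Set.range fun i : Fin (d - 1) =>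
            x₂ + u (Fin.castLE (Nat.sub_le d 1) i) + a i • u ⟨d - 1, by omega⟩)))) ∩
      {x : Fin d → ℝ | ∃ z : Fin d → ℤ, x = ofInt z}).ncard : ℤ)
      = d * (l + 1) + ∑ i, a i := by
  obtain ⟨m, rfl⟩ : ∃ m, d = m + 1 := ⟨d - 1, by omega⟩
  subst hx₂
  have hu : IsUnit (Matrix.of u) :=
    (Matrix.isUnit_iff_isUnit_det _).mpr (Int.isUnit_iff.mpr hbasis)
  push_cast
  -- `Fin (m + 1 - 1)`, `Fin.castLE _ i` and `⟨m + 1 - 1, _⟩` are definitionally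
  -- `Fin m`, `i.castSucc` and `Fin.last m`
  exact ncard_lattice_convexHull_thickenedEdge u hu x₁ (by omega) a ha
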